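/- The composition γ on binary linear codes defined by γ(L; L₁,…,L_N) = { (c¹·c₁, …, c^N·c_N) | (c¹,…,c^N) ∈ L, cᵢ ∈ Lᵢ } satisfies the operadic associativity law: γ(γ(L; L₁,…,L_N); M_{1,1},…,M_{1,k₁},…,M_{N,1},…,M_{N,k_N}) = γ(L; γ(L₁; M_{1,1},…,M_{1,k₁}), …, γ(L_N; M_{N,1},…,M_{N,k_N})). -/
import Mathlib


/-- The operadic composition of codes: replace each coordinate of a codeword of `L`
by the corresponding scaled block from the inner codes. -/
def gammaComp {ι : Type*} {β : ι → Type*} (L : Set (ι → ZMod 2))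
    (Li : ∀ i, Set (β i → ZMod 2)) : Set ((Σ i, β i) → ZMod 2) :=
  {v | ∃ c ∈ L, ∃ d : ∀ i, β i → ZMod 2, (∀ i, d i ∈ Li i) ∧
    ∀ p : Σ i, β i, v p = c p.1 * d p.1 p.2}

/-- Operadic associativity of the code composition `γ`, up to the canonical
reassociation bijection of the index sets. -/
theorem stmt3 {ι : Type*} {β : ι → Type*} {τ : ∀ i, β i → Type*}
    (L : Submodule (ZMod 2) (ι → ZMod 2))
    (Li : ∀ i, Submodule (ZMod 2) (β i → ZMod 2))
    (M : ∀ i, ∀ j : β i, Submodule (ZMod 2) (τ i j → ZMod 2)) :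
    gammaComp (gammaComp (L : Set (ι → ZMod 2)) (fun i => (Li i : Set (β i → ZMod 2))))
        (fun p : Σ i, β i => (M p.1 p.2 : Set (τ p.1 p.2 → ZMod 2)))
      = (fun v => v ∘ ⇑(Equiv.sigmaAssoc τ)) ''
          gammaComp (L : Set (ι → ZMod 2))
            (fun i => gammaComp (Li i : Set (β i → ZMod 2))
              (fun j => (M i j : Set (τ i j → ZMod 2)))) := by
  ext v
  constructor
  · rintro ⟨c', ⟨c, hc, d, hd, hcd⟩, e, he, hv⟩
    refine ⟨fun q => v ⟨⟨q.1, q.2.1⟩, q.2.2⟩, ⟨c, hc,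
      fun i => fun r => d i r.1 * e ⟨i, r.1⟩ r.2,
      fun i => ⟨d i, hd i, fun j => e ⟨i, j⟩, fun j => he ⟨i, j⟩, fun r => rfl⟩,
      ?_⟩, ?_⟩
    · rintro ⟨i, j, t⟩
      simp only [hv ⟨⟨i, j⟩, t⟩, hcd ⟨i, j⟩]
      ring
    · funext p
      rfl
  · rintro ⟨w, ⟨c, hc, f, hf, hcf⟩, rfl⟩
    choose d hd e he hde using hf
    refine ⟨fun q => c q.1 * d q.1 q.2, ⟨c, hc, d, hd, fun q => rfl⟩,
      fun q => e q.1 q.2, fun q => he q.1 q.2, ?_⟩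
    rintro ⟨⟨i, j⟩, t⟩
    show w ⟨i, j, t⟩ = _
    rw [hcf ⟨i, ⟨j, t⟩⟩, hde i ⟨j, t⟩]
    ring
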